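/- Let K be a field of characteristic different from 2 and let V₁ and V₂ be two-dimensional K-vector spaces. A vector v ∈ V₁ ⊗ V₂ is a simple tensor (i.e., v = u₁ ⊗ u₂ for some u₁ ∈ V₁ and u₂ ∈ V₂) if and only if β(v, v) = 0, where β is the canonical bilinear form on V₁ ⊗ V₂. -/

import Mathlib

open TensorProduct

set_option synthInstance.maxHeartbeats 1000000
set_option maxHeartbeats 1000000

/-- The wedge product of two vectors, as an element of the second exterior power. -/
noncomputable def wedge2 {K V : Type*} [Field K] [AddCommGroup V] [Module K V] (v w : V) :
    ⋀[K]^2 V :=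
  ⟨ExteriorAlgebra.ιMulti K 2 ![v, w], ExteriorAlgebra.ιMulti_range K 2 ⟨![v, w], rfl⟩⟩

lemma wedge2_self {K V : Type*} [Field K] [AddCommGroup V] [Module K V] (v : V) :
    wedge2 (K := K) v v = 0 :=
  Subtype.ext <| (ExteriorAlgebra.ιMulti K 2).map_eq_zero_of_eq ![v, v]
    (i := 0) (j := 1) rfl (by decide)

lemma wedge2_antisymm {K V : Type*} [Field K] [AddCommGroup V] [Module K V] (v w : V) :
    wedge2 (K := K) w v = - wedge2 v w := by
  apply Subtype.ext
  have h : ![w, v] = ![v, w] ∘ Equiv.swap (0 : Fin 2) 1 := by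
    funext i; fin_cases i <;> simp
  show ExteriorAlgebra.ιMulti K 2 ![w, v] = -(ExteriorAlgebra.ιMulti K 2 ![v, w])
  rw [h, AlternatingMap.map_swap _ _ (by decide)]

/-- A linear functional on the second exterior power built from a basis. -/
noncomputable def wedgeDual {K V : Type*} [Field K] [AddCommGroup V] [Module K V]
    (b : Module.Basis (Fin 2) K V) : (⋀[K]^2 V) →ₗ[K] K :=
  (ExteriorAlgebra.liftAlternating (Function.update (fun _ => 0) 2 b.det)) ∘ₗ
    (Submodule.subtype _)

lemma wedgeDual_wedge2 {K V : Type*} [Field K] [AddCommGroup V] [Module K V]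
    (b : Module.Basis (Fin 2) K V) (v w : V) :
    wedgeDual b (wedge2 v w) = b.det ![v, w] := by
  show ExteriorAlgebra.liftAlternating _ (ExteriorAlgebra.ιMulti K 2 ![v, w]) = _
  rw [ExteriorAlgebra.liftAlternating_apply_ιMulti, Function.update_self]

lemma wedgeDual_basis {K V : Type*} [Field K] [AddCommGroup V] [Module K V]
    (b : Module.Basis (Fin 2) K V) : wedgeDual b (wedge2 (b 0) (b 1)) = 1 := by
  rw [wedgeDual_wedge2]
  have : ![b 0, b 1] = ⇑b := by funext i; fin_cases i <;> simp
  rw [this, Module.Basis.det_self]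

lemma exists_decomp {K V₁ V₂ : Type*} [Field K] [AddCommGroup V₁] [Module K V₁]
    [AddCommGroup V₂] [Module K V₂] (e : Module.Basis (Fin 2) K V₁) (v : V₁ ⊗[K] V₂) :
    ∃ x y : V₂, v = e 0 ⊗ₜ x + e 1 ⊗ₜ y := by
  induction v with
  | zero => exact ⟨0, 0, by simp⟩
  | tmul a b =>
    refine ⟨e.repr a 0 • b, e.repr a 1 • b, ?_⟩
    have ha : a = e.repr a 0 • e 0 + e.repr a 1 • e 1 := by
      have := e.sum_repr a
      rw [Fin.sum_univ_two] at this
      exact this.symm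
    conv_lhs => rw [ha, add_tmul, smul_tmul, smul_tmul]
  | add u w hu hw =>
    obtain ⟨x1, y1, h1⟩ := hu
    obtain ⟨x2, y2, h2⟩ := hw
    exact ⟨x1 + x2, y1 + y2, by rw [h1, h2, tmul_add, tmul_add]; abel⟩

/-- over a field of characteristic ≠ 2, with `V₁`, `V₂` two-dimensional, a vector
`v ∈ V₁ ⊗ V₂` is a simple tensor if and only if `β v v = 0`, where `β` is the canonical
bilinear form on `V₁ ⊗ V₂` determined on simple tensors by
`β (v₁ ⊗ v₂) (w₁ ⊗ w₂) = (v₁ ∧ w₁) ⊗ (v₂ ∧ w₂)`. -/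
theorem simple_tensor_iff_isotropic
    (K V₁ V₂ : Type*) [Field K] (hchar : (2 : K) ≠ 0)
    [AddCommGroup V₁] [Module K V₁] [AddCommGroup V₂] [Module K V₂]
    [FiniteDimensional K V₁] [FiniteDimensional K V₂]
    (h₁ : Module.finrank K V₁ = 2) (h₂ : Module.finrank K V₂ = 2)
    (β : (V₁ ⊗[K] V₂) →ₗ[K] (V₁ ⊗[K] V₂) →ₗ[K] ((⋀[K]^2 V₁) ⊗[K] (⋀[K]^2 V₂)))
    (hβ : ∀ (v₁ w₁ : V₁) (v₂ w₂ : V₂),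
      β (v₁ ⊗ₜ v₂) (w₁ ⊗ₜ w₂) = wedge2 v₁ w₁ ⊗ₜ wedge2 v₂ w₂)
    (v : V₁ ⊗[K] V₂) :
    (∃ (u₁ : V₁) (u₂ : V₂), v = u₁ ⊗ₜ u₂) ↔ β v v = 0 := by
  constructor
  · rintro ⟨u₁, u₂, rfl⟩
    simp [hβ, wedge2_self]
  · intro h0
    let e := Module.finBasisOfFinrankEq K V₁ h₁
    obtain ⟨x, y, hv⟩ := exists_decomp e v
    have hβvv : β v v = wedge2 (e 0) (e 1) ⊗ₜ wedge2 x y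
        + wedge2 (e 0) (e 1) ⊗ₜ wedge2 x y := by
      rw [hv]
      simp only [map_add, LinearMap.add_apply, hβ, wedge2_self,
        wedge2_antisymm (e 0) (e 1), wedge2_antisymm x y, neg_tmul, tmul_neg, neg_neg,
        zero_tmul, tmul_zero]
      abel
    have hw : wedge2 (K := K) x y = 0 := by
      set Φ : ((⋀[K]^2 V₁) ⊗[K] (⋀[K]^2 V₂)) →ₗ[K] (⋀[K]^2 V₂) :=
        (TensorProduct.lid K (⋀[K]^2 V₂)).toLinearMap ∘ₗ
          LinearMap.rTensor (⋀[K]^2 V₂) (wedgeDual e) with hΦdef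
      have hΦ : Φ (β v v) = 0 := by rw [h0, map_zero]
      have hsingle : Φ (wedge2 (e 0) (e 1) ⊗ₜ wedge2 x y) = wedge2 x y := by
        simp [hΦdef, LinearMap.rTensor_tmul, wedgeDual_basis]
      rw [hβvv, map_add, hsingle] at hΦ
      have h2 : (2 : K) • wedge2 (K := K) x y = 0 := by rw [two_smul]; exact hΦ
      simpa [smul_eq_zero, hchar] using h2
    by_cases hind : LinearIndependent K ![x, y]
    · exfalso
      let b := basisOfLinearIndependentOfCardEqFinrank hind (by simpa using h₂.symm)
      have hb : wedgeDual b (wedge2 x y) = 1 := by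
        have hcoe : ![x, y] = ⇑b :=
          (coe_basisOfLinearIndependentOfCardEqFinrank _ _).symm
        rw [wedgeDual_wedge2, hcoe, Module.Basis.det_self]
      rw [hw, map_zero] at hb
      exact one_ne_zero hb.symm
    · rw [LinearIndependent.pair_iff] at hind
      push_neg at hind
      obtain ⟨s, t, hst, hne⟩ := hind
      by_cases ht : t = 0
      · have hs : s ≠ 0 := fun hs0 => hne hs0 ht
        have hx : x = 0 := by
          have hsx : s • x = 0 := by simpa [ht] using hst
          exact (smul_eq_zero.mp hsx).resolve_left hs
        exact ⟨e 1, y, by rw [hv, hx, tmul_zero, zero_add]⟩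
      · have h1 : t • y = -(s • x) := eq_neg_of_add_eq_zero_right hst
        have hy : y = (-(s / t)) • x := by
          calc y = t⁻¹ • (t • y) := (inv_smul_smul₀ ht y).symm
            _ = t⁻¹ • -(s • x) := by rw [h1]
            _ = (-(s / t)) • x := by
                rw [smul_neg, smul_smul, ← neg_smul, div_eq_inv_mul]
        refine ⟨e 0 + (-(s / t)) • e 1, x, ?_⟩
        rw [hv, hy, add_tmul, smul_tmul]
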